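/- arXiv:math/0606439 — 2 statements merged into one kernel-verified Lean document; each statement's English description precedes it below -/
import Mathlib

section
/- Let (Z(t)) be an irreducible random walk on ℤ^d with step distribution μ, killed upon leaving the half-space ℤ^{d-1}×ℕ*. Then the killed process satisfies the communication condition within the half-space: there exist θ > 0, C > 0 such that for any z ≠ z' in ℤ^{d-1}×ℕ* there is a path z = z₀, z₁, …, z_n = z' staying in ℤ^{d-1}×ℕ*, with n ≤ C·|z'−z|, |z_i − z_{i-1}| ≤ C, and μ(z_i − z_{i-1}) ≥ θ for each i. The path can be chosen so that first all steps with nonnegative last coordinate are taken, then the rest. -/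
/-! Irreducibility writes each of the finitely many vectors of sup-norm at most 1 as a sum of
steps of positive weight. Substituting these words into the coordinatewise decomposition of
`z' - z` gives a list of steps from one fixed finite set, of length `O(‖z' - z‖)`; `θ` and `C`
are a minimum and a maximum over that set. Taking the steps with nonnegative last coordinate
first, the height of the path rises from `z.2` and then falls to `z'.2`, so it never drops
below `min z.2 z'.2 ≥ 1`. -/

open Metric

theorem List.sum_flatMap {α M : Type*} [AddMonoid M] (l : List α) (f : α → List M) :
    (l.flatMap f).sum = (l.map fun a => (f a).sum).sum := by
  rw [List.flatMap_def, List.sum_flatten, List.map_map]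
  rfl

def UnitBallWordLengthLE (G : Type*) [SeminormedAddCommGroup G] (K : ℝ) : Prop :=
  ∀ w : G, ∃ l : List G, (∀ u ∈ l, ‖u‖ ≤ 1) ∧ l.sum = w ∧ (l.length : ℝ) ≤ K * ‖w‖

theorem unitBallWordLengthLE_int : UnitBallWordLengthLE ℤ 1 := by
  intro w
  refine ⟨List.replicate w.natAbs w.sign, fun u hu => ?_, ?_, ?_⟩
  · rw [List.eq_of_mem_replicate hu]
    rcases w.sign_trichotomy with h | h | h <;> simp [h]
  · rw [List.sum_replicate, nsmul_eq_mul, mul_comm, Int.sign_mul_natAbs]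
  · simp [Int.norm_eq_abs]

namespace UnitBallWordLengthLE

variable {G H : Type*} [SeminormedAddCommGroup G] [SeminormedAddCommGroup H] {K₁ K₂ : ℝ}

theorem prod (hG : UnitBallWordLengthLE G K₁) (hH : UnitBallWordLengthLE H K₂)
    (hK₁ : 0 ≤ K₁) (hK₂ : 0 ≤ K₂) : UnitBallWordLengthLE (G × H) (K₁ + K₂) := by
  intro w
  obtain ⟨l₁, hl₁, hsum₁, hlen₁⟩ := hG w.1
  obtain ⟨l₂, hl₂, hsum₂, hlen₂⟩ := hH w.2
  refine ⟨l₁.map (AddMonoidHom.inl G H) ++ l₂.map (AddMonoidHom.inr G H), ?_, ?_, ?_⟩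
  · simp only [List.mem_append, List.mem_map]
    rintro _ (⟨u, hu, rfl⟩ | ⟨u, hu, rfl⟩)
    · simpa using hl₁ u hu
    · simpa using hl₂ u hu
  · rw [List.sum_append, ← map_list_sum, ← map_list_sum, hsum₁, hsum₂]
    simp
  · simp only [List.length_append, List.length_map, Nat.cast_add]
    calc (l₁.length : ℝ) + l₂.length ≤ K₁ * ‖w.1‖ + K₂ * ‖w.2‖ := add_le_add hlen₁ hlen₂
      _ ≤ K₁ * ‖w‖ + K₂ * ‖w‖ := by gcongr <;> simp [Prod.norm_def]
      _ = (K₁ + K₂) * ‖w‖ := by ring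

theorem pi {ι : Type*} [Fintype ι] [DecidableEq ι] {G : ι → Type*}
    [∀ i, NormedAddCommGroup (G i)] {K : ℝ} (hG : ∀ i, UnitBallWordLengthLE (G i) K)
    (hK : 0 ≤ K) : UnitBallWordLengthLE (∀ i, G i) (Fintype.card ι * K) := by
  intro w
  choose l hl hsum hlen using fun i => hG i (w i)
  refine ⟨Finset.univ.toList.flatMap fun i => (l i).map (Pi.single i), ?_, ?_, ?_⟩
  · simp only [List.mem_flatMap, List.mem_map]
    rintro _ ⟨i, -, u, hu, rfl⟩
    rw [Pi.norm_single]
    exact hl i u hu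
  · have hsingle : ∀ i, ((l i).map (Pi.single i)).sum = Pi.single i (w i) := fun i => by
      rw [← hsum i]
      exact (map_list_sum (AddMonoidHom.single G i) (l i)).symm
    simp only [List.sum_flatMap, hsingle, Finset.sum_map_toList, Finset.univ_sum_single]
  · rw [List.length_flatMap, Nat.cast_list_sum, List.map_map]
    simp only [Function.comp_def, List.length_map, Finset.sum_map_toList]
    calc ∑ i, ((l i).length : ℝ) ≤ ∑ _i : ι, K * ‖w‖ :=
          Finset.sum_le_sum fun i _ => (hlen i).trans (by gcongr; exact norm_le_pi_norm w i)
      _ = Fintype.card ι * K * ‖w‖ := by simp [mul_assoc]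

end UnitBallWordLengthLE

theorem UnitBallWordLengthLE.exists_finset_of_ball_subset_closure {G : Type*}
    [SeminormedAddCommGroup G] {K : ℝ} (hK : UnitBallWordLengthLE G K)
    (hball : (closedBall (0 : G) 1).Finite) {S : Set G}
    (hS : ∀ u : G, ‖u‖ ≤ 1 → ∃ l : List G, (∀ x ∈ l, x ∈ S) ∧ l.sum = u) :
    ∃ B : Finset G, ↑B ⊆ S ∧ ∃ M : ℝ, ∀ w : G,
      ∃ T : List G, (∀ x ∈ T, x ∈ B) ∧ T.sum = w ∧ (T.length : ℝ) ≤ M * ‖w‖ := by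
  classical
  choose! L hLS hLsum using hS
  have mem_ball : ∀ {u : G}, ‖u‖ ≤ 1 → u ∈ hball.toFinset := fun hu => by simpa using hu
  set N := hball.toFinset.sup fun u => (L u).length
  refine ⟨hball.toFinset.biUnion fun u => (L u).toFinset, ?_, N * K, fun w => ?_⟩
  · intro x hx
    obtain ⟨u, hu, hx⟩ := Finset.mem_biUnion.1 hx
    exact hLS u (by simpa using hu) x (List.mem_toFinset.1 hx)
  obtain ⟨l, hl, hsum, hlen⟩ := hK w
  refine ⟨l.flatMap L, fun x hx => ?_, ?_, ?_⟩
  · obtain ⟨u, hu, hx⟩ := List.mem_flatMap.1 hx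
    exact Finset.mem_biUnion.2 ⟨u, mem_ball (hl u hu), List.mem_toFinset.2 hx⟩
  · rw [List.sum_flatMap, List.map_congr_left fun u hu => hLsum u (hl u hu), List.map_id', hsum]
  · have hlen_le : (l.flatMap L).length ≤ l.length * N := by
      rw [List.length_flatMap, ← smul_eq_mul, ← List.length_map (f := fun u => (L u).length)]
      refine List.sum_le_card_nsmul _ _ fun n hn => ?_
      obtain ⟨u, hu, rfl⟩ := List.mem_map.1 hn
      exact Finset.le_sup (f := fun u => (L u).length) (mem_ball (hl u hu))
    calc ((l.flatMap L).length : ℝ) ≤ l.length * N := by exact_mod_cast hlen_le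
      _ ≤ K * ‖w‖ * N := by gcongr
      _ = N * K * ‖w‖ := by ring

theorem Finset.exists_pos_forall_le {α : Type*} (s : Finset α) {f : α → ℝ}
    (hf : ∀ x ∈ s, 0 < f x) : ∃ θ > 0, ∀ x ∈ s, θ ≤ f x := by
  rcases s.eq_empty_or_nonempty with rfl | hs
  · exact ⟨1, one_pos, by simp⟩
  · obtain ⟨y, hy, hmin⟩ := s.exists_min_image f hs
    exact ⟨f y, hf y hy, hmin⟩

theorem List.exists_perm_append_nonneg_nonpos {α H : Type*} [Zero H] [LinearOrder H]
    (φ : α → H) (T : List α) :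
    ∃ P N : List α, (P ++ N).Perm T ∧ (∀ x ∈ P, 0 ≤ φ x) ∧ ∀ x ∈ N, φ x ≤ 0 :=
  ⟨T.filter (0 ≤ φ ·), T.filter fun x => !decide (0 ≤ φ x), List.filter_append_perm _ _,
    by simp, fun x hx => (by simpa using (List.mem_filter.1 hx).2 : φ x < 0).le⟩

section PartialSums

variable {G : Type*}

def partialSums [AddMonoid G] (z : G) (T : List G) (j : Fin (T.length + 1)) : G :=
  z + (T.take j).sum

@[simp]
theorem partialSums_zero [AddMonoid G] (z : G) (T : List G) : partialSums z T 0 = z := by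
  simp [partialSums]

theorem partialSums_last [AddMonoid G] (z : G) (T : List G) :
    partialSums z T (Fin.last _) = z + T.sum := by
  simp [partialSums]

theorem partialSums_succ_sub_castSucc [AddCommGroup G] (z : G) (T : List G) (i : Fin T.length) :
    partialSums z T i.succ - partialSums z T i.castSucc = T[(i : ℕ)] := by
  simp only [partialSums, Fin.val_succ, Fin.val_castSucc, List.sum_take_succ _ _ i.2]
  abel

variable {H : Type*} [AddCommGroup H] [LinearOrder H] [IsOrderedAddMonoid H]

theorem List.min_zero_sum_le_sum_take_append {P N : List H} (hP : ∀ x ∈ P, 0 ≤ x)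
    (hN : ∀ x ∈ N, x ≤ 0) (j : ℕ) : min 0 (P ++ N).sum ≤ ((P ++ N).take j).sum := by
  rw [List.take_append, List.sum_append, List.sum_append]
  rcases le_or_gt j P.length with hj | hj
  · rw [Nat.sub_eq_zero_of_le hj, List.take_zero, List.sum_nil, add_zero]
    exact (min_le_left _ _).trans
      (List.sum_nonneg fun x hx => hP x (List.mem_of_mem_take hx))
  · rw [List.take_of_length_le hj.le]
    have hdrop : (N.drop (j - P.length)).sum ≤ 0 :=
      (List.sum_le_card_nsmul _ 0 fun x hx => hN x (List.mem_of_mem_drop hx)).trans_eq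
        (smul_zero _)
    have htake : N.sum ≤ (N.take (j - P.length)).sum := by
      rw [← List.sum_take_add_sum_drop N (j - P.length)]
      exact add_le_of_nonpos_right hdrop
    exact (min_le_right _ _).trans (by gcongr)

theorem min_le_partialSums_append [AddCommGroup G] (φ : G →+ H) (z : G) {P N : List G}
    (hP : ∀ x ∈ P, 0 ≤ φ x) (hN : ∀ x ∈ N, φ x ≤ 0) (j : Fin ((P ++ N).length + 1)) :
    min (φ z) (φ (z + (P ++ N).sum)) ≤ φ (partialSums z (P ++ N) j) := by
  have key := List.min_zero_sum_le_sum_take_append (P := P.map φ) (N := N.map φ)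
    (by simpa using hP) (by simpa using hN) j
  rw [← List.map_append, ← List.map_take, ← map_list_sum, ← map_list_sum] at key
  calc min (φ z) (φ (z + (P ++ N).sum)) = φ z + min 0 (φ (P ++ N).sum) := by
        rw [map_add, ← min_add_add_left, add_zero]
    _ ≤ φ (partialSums z (P ++ N) j) := by
        rw [partialSums, map_add]
        gcongr

end PartialSums

theorem communication_condition_killed_walk_general (k : ℕ)
    (μ : ((Fin k → ℤ) × ℤ) → ℝ)
    (hirr : ∀ z : (Fin k → ℤ) × ℤ,
      ∃ l : List ((Fin k → ℤ) × ℤ), (∀ u ∈ l, 0 < μ u) ∧ l.sum = z) :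
    ∃ θ > (0 : ℝ), ∃ C > (0 : ℝ), ∀ z z' : (Fin k → ℤ) × ℤ,
      1 ≤ z.2 → 1 ≤ z'.2 → z ≠ z' →
      ∃ n : ℕ, ∃ path : Fin (n + 1) → (Fin k → ℤ) × ℤ,
        path 0 = z ∧ path (Fin.last n) = z' ∧ (n : ℝ) ≤ C * ‖z' - z‖ ∧
        (∀ j : Fin (n + 1), 1 ≤ (path j).2) ∧
        (∀ i : Fin n, ‖path i.succ - path i.castSucc‖ ≤ C ∧
          θ ≤ μ (path i.succ - path i.castSucc)) ∧
        ∃ m : ℕ, ∀ i : Fin n,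
          ((i : ℕ) < m → 0 ≤ (path i.succ - path i.castSucc).2) ∧
          (m ≤ (i : ℕ) → (path i.succ - path i.castSucc).2 ≤ 0) := by
  have hwords : UnitBallWordLengthLE ((Fin k → ℤ) × ℤ) (Fintype.card (Fin k) * 1 + 1) :=
    ((UnitBallWordLengthLE.pi fun _ => unitBallWordLengthLE_int) zero_le_one).prod
      unitBallWordLengthLE_int (by positivity) zero_le_one
  obtain ⟨B, hBpos, M, hM⟩ := hwords.exists_finset_of_ball_subset_closure
    (isCompact_closedBall _ _).finite_of_discrete (S := {x | 0 < μ x}) fun u _ => hirr u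
  obtain ⟨θ, hθ, hθB⟩ := B.exists_pos_forall_le hBpos
  obtain ⟨C₀, hC₀⟩ := (B.finite_toSet.image norm).bddAbove
  refine ⟨θ, hθ, max 1 (max C₀ M), lt_max_of_lt_left one_pos, fun z z' hz hz' _ => ?_⟩
  obtain ⟨T, hTB, hTsum, hTlen⟩ := hM (z' - z)
  obtain ⟨P, N, hperm, hP, hN⟩ := T.exists_perm_append_nonneg_nonpos Prod.snd
  have hend : z + (P ++ N).sum = z' := by rw [hperm.sum_eq, hTsum, add_sub_cancel]
  have hstepB : ∀ i : Fin (P ++ N).length, (P ++ N)[(i : ℕ)] ∈ B :=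
    fun i => hTB _ (hperm.subset (List.getElem_mem _))
  refine ⟨(P ++ N).length, partialSums z (P ++ N), partialSums_zero _ _,
    by rw [partialSums_last, hend], ?_, fun j => ?_, fun i => ?_, P.length, fun i => ?_⟩
  · rw [hperm.length_eq]
    exact hTlen.trans (by gcongr; exact (le_max_right _ _).trans (le_max_right _ _))
  · have hheight := min_le_partialSums_append (AddMonoidHom.snd _ ℤ) z hP hN j
    simp only [AddMonoidHom.coe_snd, hend] at hheight
    exact (le_min hz hz').trans hheight
  · rw [partialSums_succ_sub_castSucc]
    refine ⟨?_, hθB _ (hstepB i)⟩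
    exact (hC₀ (Set.mem_image_of_mem _ (hstepB i))).trans
      ((le_max_left _ _).trans (le_max_right _ _))
  · rw [partialSums_succ_sub_castSucc]
    refine ⟨fun hi => ?_, fun hi => ?_⟩
    · rw [List.getElem_append_left hi]; exact hP _ (List.getElem_mem _)
    · rw [List.getElem_append_right hi]; exact hN _ (List.getElem_mem _)

/-- The random walk on `ℤ^{k}×ℤ` killed when leaving the half-space
`ℤ^{k}×ℕ*` satisfies the communication condition inside the half-space: any two distinct
points of the half-space are joined by a path staying in the half-space, of length at most
`C·|z'−z|`, with steps of norm at most `C` and probability at least `θ`; moreover the path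
can be chosen so that all steps with nonnegative last coordinate come first, followed by
the steps with nonpositive last coordinate. -/
theorem communication_condition_killed_walk (k : ℕ)
    (μ : ((Fin k → ℤ) × ℤ) → ℝ) (hμ0 : ∀ z, 0 ≤ μ z) (hμ1 : ∑' z, μ z = 1)
    (hirr : ∀ z : (Fin k → ℤ) × ℤ,
      ∃ l : List ((Fin k → ℤ) × ℤ), (∀ u ∈ l, 0 < μ u) ∧ l.sum = z) :
    ∃ θ > (0 : ℝ), ∃ C > (0 : ℝ), ∀ z z' : (Fin k → ℤ) × ℤ,
      1 ≤ z.2 → 1 ≤ z'.2 → z ≠ z' →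
      ∃ n : ℕ, ∃ path : Fin (n + 1) → (Fin k → ℤ) × ℤ,
        path 0 = z ∧ path (Fin.last n) = z' ∧ (n : ℝ) ≤ C * ‖z' - z‖ ∧
        (∀ j : Fin (n + 1), 1 ≤ (path j).2) ∧
        (∀ i : Fin n, ‖path i.succ - path i.castSucc‖ ≤ C ∧
          θ ≤ μ (path i.succ - path i.castSucc)) ∧
        ∃ m : ℕ, ∀ i : Fin n,
          ((i : ℕ) < m → 0 ≤ (path i.succ - path i.castSucc).2) ∧
          (m ≤ (i : ℕ) → (path i.succ - path i.castSucc).2 ≤ 0) :=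
  communication_condition_killed_walk_general k μ hirr
end

section
/- Let h ≥ 0 be a harmonic function of a substochastic chain on ℤ^{d-1}×ℕ* admitting the integral representation h(z) = ∫_{∂₊D} h_{a,+}(z) dν(a) with ν a positive Borel measure on ∂₊D, where each h_{a,+}(x,y) = e^{α·x} f_a(y) with f_a(y) > 0 and α = α(a) the first d−1 coordinates of a. If ν is not concentrated at a single point â = (α̂, β̂), then sup_{x∈ℤ^{d-1}} e^{−α̂·x} h(x,y) = +∞ for some y. -/
open MeasureTheory

open scoped BigOperators

/-- If `h ≥ 0` admits the integral representation
`h(x,y) = ∫_{∂₊D} e^{α(a)·x} f_a(y) dν(a)` with `f_a(y) > 0`, over a compact set `A`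
on which `a ↦ α(a)` (the first coordinates) is injective, and `ν` is not concentrated at
a single point `â = (α̂,β̂)`, then `sup_x e^{−α̂·x} h(x,y) = +∞` for some `y`. -/
theorem representation_not_point_mass_unbounded (k : ℕ)
    (A : Set ((Fin k → ℝ) × ℝ)) (hA : IsCompact A)
    (hinj : Set.InjOn Prod.fst A)
    (ν : Measure ((Fin k → ℝ) × ℝ)) (hsupp : ν Aᶜ = 0)
    (f : ((Fin k → ℝ) × ℝ) → ℤ → ℝ)
    (hfpos : ∀ a ∈ A, ∀ y : ℤ, 1 ≤ y → 0 < f a y)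
    (h : ((Fin k → ℤ) × ℤ) → ℝ) (hh0 : ∀ z, 0 ≤ h z)
    (hint : ∀ (x : Fin k → ℤ) (y : ℤ), 1 ≤ y →
      Integrable (fun a : (Fin k → ℝ) × ℝ =>
        Real.exp (∑ i, a.1 i * (x i : ℝ)) * f a y) ν)
    (hrep : ∀ (x : Fin k → ℤ) (y : ℤ), 1 ≤ y →
      h (x, y) = ∫ a, Real.exp (∑ i, a.1 i * (x i : ℝ)) * f a y ∂ν)
    (ahat : (Fin k → ℝ) × ℝ) (hahat : ahat ∈ A)
    (hnotpoint : ν (A \ {ahat}) ≠ 0) :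
    ∃ y : ℤ, 1 ≤ y ∧
      ¬ BddAbove (Set.range fun x : Fin k → ℤ =>
        Real.exp (-∑ i, ahat.1 i * (x i : ℝ)) * h (x, y)) := by
  classical
  -- Step 1: some "half space" has positive measure
  have hsub : A \ {ahat} ⊆ ⋃ i : Fin k,
      ({a : (Fin k → ℝ) × ℝ | a ∈ A ∧ 0 < ((1 : ℤ) : ℝ) * (a.1 i - ahat.1 i)} ∪
       {a : (Fin k → ℝ) × ℝ | a ∈ A ∧ 0 < ((-1 : ℤ) : ℝ) * (a.1 i - ahat.1 i)}) := by
    rintro a ⟨haA, hane⟩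
    have hane' : a ≠ ahat := by simpa using hane
    have hfst : a.1 ≠ ahat.1 := fun he => hane' (hinj haA hahat he)
    obtain ⟨i, hi⟩ := Function.ne_iff.mp hfst
    refine Set.mem_iUnion.mpr ⟨i, ?_⟩
    rcases lt_or_gt_of_ne hi with h1 | h1
    · exact Or.inr ⟨haA, by push_cast; linarith⟩
    · exact Or.inl ⟨haA, by push_cast; linarith⟩
  have hex : ∃ (i : Fin k) (s : ℤ), (s = 1 ∨ s = -1) ∧
      ν {a : (Fin k → ℝ) × ℝ | a ∈ A ∧ 0 < (s : ℝ) * (a.1 i - ahat.1 i)} ≠ 0 := by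
    by_contra hcon
    push_neg at hcon
    refine hnotpoint (measure_mono_null hsub (measure_iUnion_null fun i => ?_))
    exact measure_union_null (hcon i 1 (Or.inl rfl)) (hcon i (-1) (Or.inr rfl))
  obtain ⟨i, s, hs, hνS⟩ := hex
  -- Step 2: refine to a set where the gap is at least ε > 0
  have hScover : {a : (Fin k → ℝ) × ℝ | a ∈ A ∧ 0 < (s : ℝ) * (a.1 i - ahat.1 i)} ⊆
      ⋃ m : ℕ, {a : (Fin k → ℝ) × ℝ | a ∈ A ∧
        1 / ((m : ℝ) + 1) ≤ (s : ℝ) * (a.1 i - ahat.1 i)} := by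
    rintro a ⟨haA, hapos⟩
    obtain ⟨m, hm⟩ := exists_nat_one_div_lt hapos
    exact Set.mem_iUnion.mpr ⟨m, haA, hm.le⟩
  have hexm : ∃ m : ℕ, ν {a : (Fin k → ℝ) × ℝ | a ∈ A ∧
      1 / ((m : ℝ) + 1) ≤ (s : ℝ) * (a.1 i - ahat.1 i)} ≠ 0 := by
    by_contra hcon
    push_neg at hcon
    exact hνS (measure_mono_null hScover (measure_iUnion_null hcon))
  obtain ⟨m, hνT⟩ := hexm
  set ε : ℝ := 1 / ((m : ℝ) + 1) with hεdef
  have hε : 0 < ε := by positivity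
  set T : Set ((Fin k → ℝ) × ℝ) :=
    {a : (Fin k → ℝ) × ℝ | a ∈ A ∧ ε ≤ (s : ℝ) * (a.1 i - ahat.1 i)} with hTdef
  have hTsubA : T ⊆ A := fun a ha => ha.1
  have hTmeas : MeasurableSet T := by
    have h1 : MeasurableSet A := hA.isClosed.measurableSet
    have h2 : MeasurableSet {a : (Fin k → ℝ) × ℝ | ε ≤ (s : ℝ) * (a.1 i - ahat.1 i)} := by
      refine (isClosed_le continuous_const ?_).measurableSet
      fun_prop
    exact (h1.inter h2 : MeasurableSet (A ∩ _))
  have hνTpos : 0 < ν T := hνT.bot_lt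
  -- Step 3: f(·,1) is integrable and has positive integral over T
  have hf1 : Integrable (fun a => f a 1) ν := by
    simpa using hint 0 1 le_rfl
  have hc : 0 < ∫ a in T, f a 1 ∂ν := by
    rw [integral_pos_iff_support_of_nonneg_ae
      (ae_restrict_of_forall_mem hTmeas fun a ha => (hfpos a ha.1 1 le_rfl).le)
      (hf1.restrict)]
    have hTsupp : T ⊆ Function.support (fun a => f a 1) := fun a ha =>
      (hfpos a ha.1 1 le_rfl).ne'
    calc (0 : ENNReal) < ν T := hνTpos
      _ = ν (Function.support (fun a => f a 1) ∩ T) := by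
          rw [Set.inter_eq_self_of_subset_right hTsupp]
      _ = (ν.restrict T) (Function.support fun a => f a 1) := by
          rw [Measure.restrict_apply' hTmeas]
  set c : ℝ := ∫ a in T, f a 1 ∂ν with hcdef
  refine ⟨1, le_rfl, ?_⟩
  rintro ⟨M, hM⟩
  rw [mem_upperBounds] at hM
  -- Step 4: pick n large
  obtain ⟨n, hn⟩ := exists_nat_gt (M / (c * ε))
  set x : Fin k → ℤ := fun j => if j = i then s * (n : ℤ) else 0 with hxdef
  have hsum : ∀ b : Fin k → ℝ, ∑ j, b j * ((x j : ℤ) : ℝ) = b i * ((s : ℝ) * (n : ℝ)) := by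
    intro b
    rw [Finset.sum_eq_single i]
    · simp [hxdef]
    · intro j _ hj; simp [hxdef, hj]
    · simp
  -- integrand over the shifted exponent
  set G : ((Fin k → ℝ) × ℝ) → ℝ :=
    fun a => Real.exp (a.1 i * ((s : ℝ) * (n : ℝ)) - ahat.1 i * ((s : ℝ) * (n : ℝ))) * f a 1
    with hGdef
  have hGeq : (fun a : (Fin k → ℝ) × ℝ =>
      Real.exp (-(ahat.1 i * ((s : ℝ) * (n : ℝ)))) *
        (Real.exp (∑ j, a.1 j * ((x j : ℤ) : ℝ)) * f a 1)) = G := by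
    funext a
    rw [hsum, ← mul_assoc, ← Real.exp_add, neg_add_eq_sub, hGdef]
  have hGint : Integrable G ν := by
    have := (hint x 1 le_rfl).const_mul (Real.exp (-(ahat.1 i * ((s : ℝ) * (n : ℝ)))))
    rwa [hGeq] at this
  have hGnn : 0 ≤ᵐ[ν] G := by
    rw [Filter.EventuallyLE, ae_iff]
    refine measure_mono_null (fun a ha => ?_) hsupp
    simp only [Set.mem_setOf_eq, not_le] at ha
    intro haA
    exact absurd (mul_pos (Real.exp_pos _) (hfpos a haA 1 le_rfl)) (not_lt.mpr ha.le)
  have h1 : Real.exp (-∑ j, ahat.1 j * ((x j : ℤ) : ℝ)) * h (x, 1) = ∫ a, G a ∂ν := by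
    rw [hrep x 1 le_rfl, hsum, ← integral_const_mul, hGeq]
  have h2 : ∫ a in T, G a ∂ν ≤ ∫ a, G a ∂ν := setIntegral_le_integral hGint hGnn
  have h3 : ∀ a ∈ T, Real.exp (ε * (n : ℝ)) * f a 1 ≤ G a := by
    intro a ha
    have hfp := hfpos a ha.1 1 le_rfl
    have hexp : ε * (n : ℝ) ≤ a.1 i * ((s : ℝ) * (n : ℝ)) - ahat.1 i * ((s : ℝ) * (n : ℝ)) := by
      have h2 := ha.2
      nlinarith [Nat.cast_nonneg (α := ℝ) n]
    exact mul_le_mul (Real.exp_le_exp.mpr hexp) le_rfl hfp.le (Real.exp_pos _).le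
  have h4 : Real.exp (ε * (n : ℝ)) * c ≤ ∫ a in T, G a ∂ν := by
    rw [hcdef, ← integral_const_mul]
    exact setIntegral_mono_on (hf1.const_mul _).integrableOn hGint.integrableOn hTmeas h3
  have h5 : Real.exp (-∑ j, ahat.1 j * ((x j : ℤ) : ℝ)) * h (x, 1) ≤ M :=
    hM _ (Set.mem_range_self x)
  have hMlt : M < Real.exp (ε * (n : ℝ)) * c := by
    have hMn : M < (n : ℝ) * (c * ε) := (div_lt_iff₀ (mul_pos hc hε)).mp hn
    nlinarith [Real.add_one_le_exp (ε * (n : ℝ)), hc, hε]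
  linarith
end
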